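/- Let X_obs ⊆ ℝ² be a nonempty finite union of two-dimensional convex polytopes (convex hulls of finite sets), let b > 0, and let the buffered obstacle be X_obs^b = {p ∈ ℝ² : ∃ p' ∈ X_obs, ‖p − p'‖ ≤ b}. Then the frontier of X_obs^b is contained in the union of finitely many line segments together with finitely many circles of radius b (metric spheres of radius b centered at points of X_obs). -/

import Mathlib

/-!
A frontier point `p` of the buffer lies at distance exactly `b` from `X_obs`, attained at a
nearest point `q` of one of the polytopes `conv V`. Nearest points are characterized by
`⟪p - q, x - q⟫ ≤ 0` on `conv V`, so `q` is a convex combination of the vertices maximizing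
`⟪p - q, ·⟫`; in the plane these lie on the line through `q` perpendicular to `p - q`, hence `q`
lies on a segment `[v₁, v₂]` between two of them. Either `q` is a vertex, and `p` lies on the
circle of radius `b` about it, or `p - q` is a normal of length `b` to the edge `[v₁, v₂]`, and
`p` lies on that edge translated by it.
-/

open Set Real RealInnerProductSpace

noncomputable section

abbrev Pt := EuclideanSpace ℝ (Fin 2)

/-- The closed segment `[a, b]`. -/
def seg (a b : Pt) : Set Pt := segment ℝ a b

/-- The line through `a` and `b`. -/
def lineThrough (a b : Pt) : Set Pt := {p : Pt | ∃ s : ℝ, p = a + s • (b - a)}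

/-- Rotation of the plane by angle `α` about the origin. -/
def rot (α : ℝ) (p : Pt) : Pt :=
  !₂[Real.cos α * p 0 - Real.sin α * p 1, Real.sin α * p 0 + Real.cos α * p 1]

/-- A vector normal to the segment from `a` to `b`. -/
def nvec (a b : Pt) : Pt := !₂[-(b 1 - a 1), b 0 - a 0]

/-- The closed half-plane bounded by the line through `a` and `b` containing `c`. -/
def halfPlane (a b c : Pt) : Set Pt :=
  if 0 ≤ ⟪nvec a b, c - a⟫ then {p : Pt | 0 ≤ ⟪nvec a b, p - a⟫}
  else {p : Pt | ⟪nvec a b, p - a⟫ ≤ 0}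

/-- Orthogonal projection of `p` onto the line through `a` and `b`. -/
def lineProj (a b p : Pt) : Pt :=
  a + (⟪p - a, b - a⟫ / ⟪b - a, b - a⟫) • (b - a)

/-- A continuous family of direct planar isometries indexed by `t ∈ [0, T]`,
each of the form `p ↦ rot (θ t) (p - c) + s t + c`. -/
structure TransFam (c : Pt) (T : ℝ) where
  θ : ℝ → ℝ
  trans : ℝ → Pt
  contθ : ContinuousOn θ (Icc 0 T)
  contTrans : ContinuousOn trans (Icc 0 T)

/-- The isometry at time `t`. -/
def TransFam.R {c : Pt} {T : ℝ} (F : TransFam c T) (t : ℝ) (p : Pt) : Pt :=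
  rot (F.θ t) (p - c) + F.trans t + c

/-- The family `F` attempts to pass `X₀` through the segment with endpoints `e₁, e₂`,
where `c ∈ X₀` is the reference point (so `halfPlane e₁ e₂ c` is the half-plane containing
`X₀`). -/
def AttemptsPass {c : Pt} {T : ℝ} (F : TransFam c T) (X₀ : Set Pt) (e₁ e₂ : Pt) : Prop :=
  ∃ t₀ t₁ : ℝ, 0 < t₀ ∧ t₀ ≤ t₁ ∧ t₁ ≤ T ∧
    (∀ t ∈ Icc t₀ t₁, (F.R t '' X₀ ∩ (seg e₁ e₂ \ {e₁, e₂})).Nonempty) ∧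
    (∀ t ∈ Ico 0 t₀, F.R t '' X₀ ⊆ halfPlane e₁ e₂ c) ∧
    (∀ t ∈ Ico 0 T, e₁ ∉ F.R t '' X₀ ∧ e₂ ∉ F.R t '' X₀)

/-- Penetration distance of `X₀` through the segment `[e₁, e₂]` under the family `F`:
the supremum of distances to the line `ℓ_I` over points of `R_T(X₀)` outside the
half-plane `P_I` whose orthogonal projection onto `ℓ_I` lies in `I` (`0` if empty,
via `Real.sSup_empty`). -/
def penetration {c : Pt} {T : ℝ} (F : TransFam c T) (X₀ : Set Pt) (e₁ e₂ : Pt) : ℝ :=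
  sSup {d : ℝ | ∃ p, p ∈ F.R T '' X₀ ∧ p ∉ halfPlane e₁ e₂ c ∧
      lineProj e₁ e₂ p ∈ seg e₁ e₂ ∧ d = Metric.infDist p (lineThrough e₁ e₂)}

/-- The width of a planar set: the infimum over unit directions `u` of
`sup ⟪x,u⟫ - inf ⟪x,u⟫` over `x ∈ K`. -/
def width (K : Set Pt) : ℝ :=
  sInf {w : ℝ | ∃ u : Pt, ‖u‖ = 1 ∧
    w = sSup ((fun x => ⟪x, u⟫) '' K) - sInf ((fun x => ⟪x, u⟫) '' K)}

/-- Penetration of `X₀` into the circle `C` through the chord `[e₁, e₂]` under `F`. -/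
def penetrationCircle {c : Pt} {T : ℝ} (F : TransFam c T) (X₀ : Set Pt) (C : Set Pt)
    (e₁ e₂ : Pt) : ℝ :=
  sSup {d : ℝ | ∃ p₁ p₂, p₁ ∈ F.R T '' X₀ ∩ C ∧ p₂ ∈ F.R T '' X₀ \ halfPlane e₁ e₂ c ∧
      d = ‖p₁ - p₂‖}


/-- The set of penetration distances achievable by passing `X₀` through some segment of
length `L` whose line is disjoint from `X₀` and with `X₀` in the interior of the
corresponding half-plane, under some transformation family attempting the pass. -/
def penSet (X₀ : Set Pt) (c : Pt) (L : ℝ) : Set ℝ :=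
  {p : ℝ | ∃ e₁ e₂ : Pt, e₁ ≠ e₂ ∧ ‖e₂ - e₁‖ = L ∧
    lineThrough e₁ e₂ ∩ X₀ = ∅ ∧ X₀ ⊆ interior (halfPlane e₁ e₂ c) ∧
    ∃ T : ℝ, 0 < T ∧ ∃ F : TransFam c T, AttemptsPass F X₀ e₁ e₂ ∧
      p = penetration F X₀ e₁ e₂}

/-- The axis-aligned rectangle `[0, L] × [0, W]`. -/
def rect (L W : ℝ) : Set Pt := {p : Pt | p 0 ∈ Icc 0 L ∧ p 1 ∈ Icc 0 W}

section ConvexHull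

variable {E : Type*} [AddCommGroup E] [Module ℝ E]

theorem mem_convexHull_setOf_eq_of_forall_le {V : Finset E} {f : E →ₗ[ℝ] ℝ} {q : E}
    (hq : q ∈ convexHull ℝ (V : Set E)) (hf : ∀ v ∈ V, f v ≤ f q) :
    q ∈ convexHull ℝ {v ∈ (V : Set E) | f v = f q} := by
  classical
  obtain ⟨w, hw₀, hw₁, hwq⟩ := Finset.mem_convexHull.1 hq
  have hsum : ∑ v ∈ V, w v * (f v - f q) = 0 := by
    have : f q = ∑ v ∈ V, w v * f v := by
      rw [← hwq, Finset.centerMass_eq_of_sum_1 _ _ hw₁, map_sum]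
      simp only [id, map_smul, smul_eq_mul]
    simp only [mul_sub, Finset.sum_sub_distrib, ← Finset.sum_mul, hw₁, one_mul, ← this, sub_self]
  have hterm : ∀ v ∈ V, w v * (f v - f q) ≤ 0 := fun v hv =>
    mul_nonpos_of_nonneg_of_nonpos (hw₀ v hv) (sub_nonpos.2 (hf v hv))
  have hsupp : ∀ v ∈ V, w v ≠ 0 → f v = f q := fun v hv hwv => by
    have := (Finset.sum_eq_zero_iff_of_nonpos hterm).1 hsum v hv
    exact sub_eq_zero.1 ((mul_eq_zero.1 this).resolve_left hwv)
  have hmem :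
      {v ∈ V | w v ≠ 0}.centerMass w id ∈ convexHull ℝ {v ∈ (V : Set E) | f v = f q} := by
    refine Finset.centerMass_mem_convexHull _ (fun v hv => hw₀ v (Finset.mem_filter.1 hv).1) ?_
      fun v hv => ?_
    · rw [Finset.sum_filter_ne_zero, hw₁]
      exact one_pos
    · obtain ⟨hvV, hwv⟩ := Finset.mem_filter.1 hv
      exact ⟨hvV, hsupp v hvV hwv⟩
  rwa [Finset.centerMass_filter_ne_zero, hwq] at hmem

theorem exists_mem_segment_of_mem_convexHull_of_subset_range {S : Set E} (hS : S.Finite)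
    {g : ℝ →ᵃ[ℝ] E} (hSg : S ⊆ range g) {x : E} (hx : x ∈ convexHull ℝ S) :
    ∃ a ∈ S, ∃ b ∈ S, x ∈ segment ℝ a b := by
  obtain ⟨T, -, hT, rfl⟩ := exists_subset_image_finite_and.1 ⟨S, by rwa [image_univ], hS, rfl⟩
  rw [← AffineMap.image_convexHull] at hx
  obtain ⟨t, ht, rfl⟩ := hx
  have hTne : T.Nonempty := convexHull_nonempty_iff.1 ⟨t, ht⟩
  obtain ⟨a, ha, hmin⟩ := T.exists_min_image id hT hTne
  obtain ⟨b, hb, hmax⟩ := T.exists_max_image id hT hTne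
  refine ⟨g a, mem_image_of_mem g ha, g b, mem_image_of_mem g hb, ?_⟩
  rw [← image_segment, segment_eq_Icc (show a ≤ b from hmin b hb)]
  have hTab : T ⊆ Icc a b := fun s hs => ⟨hmin s hs, hmax s hs⟩
  exact mem_image_of_mem g (convexHull_min hTab (convex_Icc a b) ht)

end ConvexHull

theorem inner_sub_nonpos_of_forall_norm_sub_le {F : Type*} [NormedAddCommGroup F]
    [InnerProductSpace ℝ F] {K : Set F} (hK : Convex ℝ K) {p q : F} (hq : q ∈ K)
    (hmin : ∀ x ∈ K, ‖p - q‖ ≤ ‖p - x‖) {x : F} (hx : x ∈ K) : ⟪p - q, x - q⟫ ≤ 0 := by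
  have : Nonempty K := ⟨⟨q, hq⟩⟩
  refine (norm_eq_iInf_iff_real_inner_le_zero hK hq).1 ?_ x hx
  have hbdd : BddBelow (range fun y : K => ‖p - y‖) := ⟨0, by rintro _ ⟨y, rfl⟩; positivity⟩
  exact le_antisymm (le_ciInf fun y => hmin y y.2) (ciInf_le hbdd ⟨q, hq⟩)

theorem exists_norm_sub_eq_of_mem_frontier {E : Type*} [SeminormedAddCommGroup E] {X : Set E}
    (hX : IsCompact X) {b : ℝ} (hb : 0 ≤ b) {p : E}
    (hp : p ∈ frontier {p | ∃ p' ∈ X, ‖p - p'‖ ≤ b}) :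
    ∃ q ∈ X, ‖p - q‖ = b ∧ ∀ x ∈ X, ‖p - q‖ ≤ ‖p - x‖ := by
  have hbuf : {p | ∃ p' ∈ X, ‖p - p'‖ ≤ b} = Metric.cthickening b X := by
    rw [hX.cthickening_eq_biUnion_closedBall hb]
    ext p
    simp [dist_eq_norm]
  rw [hbuf] at hp
  rcases X.eq_empty_or_nonempty with rfl | hne
  · simp at hp
  obtain ⟨q, hq, hpq⟩ := hX.exists_infDist_eq_dist hne p
  have hinf : Metric.infDist p X = b := by
    rw [Metric.infDist, Metric.frontier_cthickening_subset X hp, ENNReal.toReal_ofReal hb]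
  simp only [← dist_eq_norm]
  exact ⟨q, hq, hpq ▸ hinf, fun x hx => hpq ▸ Metric.infDist_le_dist_of_mem hx⟩

theorem inner_eq_fin_two (x y : Pt) : ⟪x, y⟫ = x 0 * y 0 + x 1 * y 1 := by
  simp [PiLp.inner_apply, Fin.sum_univ_two, mul_comm]

theorem norm_sq_eq_fin_two (x : Pt) : ‖x‖ ^ 2 = x 0 ^ 2 + x 1 ^ 2 := by
  rw [← real_inner_self_eq_norm_sq, inner_eq_fin_two, sq, sq]

theorem nvec_apply_zero (a b : Pt) : nvec a b 0 = -(b 1 - a 1) := rfl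

theorem nvec_apply_one (a b : Pt) : nvec a b 1 = b 0 - a 0 := rfl

theorem norm_nvec (a b : Pt) : ‖nvec a b‖ = ‖b - a‖ := by
  refine (sq_eq_sq₀ (norm_nonneg _) (norm_nonneg _)).1 ?_
  rw [norm_sq_eq_fin_two, norm_sq_eq_fin_two, nvec_apply_zero, nvec_apply_one, PiLp.sub_apply,
    PiLp.sub_apply]
  ring

theorem nvec_swap (a b : Pt) : nvec b a = -nvec a b := by
  ext i
  fin_cases i
  · simp only [Fin.zero_eta, nvec_apply_zero, PiLp.neg_apply, neg_sub]
  · simp only [Fin.mk_one, nvec_apply_one, PiLp.neg_apply, neg_sub]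

theorem exists_eq_smul_nvec {a b z : Pt} (hab : a ≠ b) (h : ⟪b - a, z⟫ = 0) :
    ∃ c : ℝ, z = c • nvec a b := by
  have hn : (b - a) 0 ^ 2 + (b - a) 1 ^ 2 ≠ 0 := by
    rw [← norm_sq_eq_fin_two]
    exact pow_ne_zero 2 (norm_ne_zero_iff.2 (sub_ne_zero.2 hab.symm))
  rw [inner_eq_fin_two] at h
  simp only [PiLp.sub_apply] at hn h
  refine ⟨((b 0 - a 0) * z 1 - (b 1 - a 1) * z 0) / ((b 0 - a 0) ^ 2 + (b 1 - a 1) ^ 2), ?_⟩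
  ext i
  fin_cases i
  · rw [Fin.zero_eta, PiLp.smul_apply, nvec_apply_zero, smul_eq_mul]
    field_simp
    linear_combination (b 0 - a 0) * h
  · rw [Fin.mk_one, PiLp.smul_apply, nvec_apply_one, smul_eq_mul]
    field_simp
    linear_combination (b 1 - a 1) * h

def offsetEdge (r : ℝ) (a b : Pt) : Pt × Pt :=
  (a + (r / ‖b - a‖) • nvec a b, b + (r / ‖b - a‖) • nvec a b)

theorem mem_seg_offsetEdge_or_mem_seg_offsetEdge_swap {a b p q : Pt} (hab : a ≠ b)
    (hq : q ∈ seg a b) (hperp : ⟪p - q, b - a⟫ = 0) :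
    p ∈ seg (offsetEdge ‖p - q‖ a b).1 (offsetEdge ‖p - q‖ a b).2 ∨
      p ∈ seg (offsetEdge ‖p - q‖ b a).1 (offsetEdge ‖p - q‖ b a).2 := by
  obtain ⟨c, hc⟩ := exists_eq_smul_nvec hab (real_inner_comm (p - q) (b - a) ▸ hperp)
  have hnorm : ‖p - q‖ = |c| * ‖b - a‖ := by
    rw [hc, norm_smul, norm_nvec, Real.norm_eq_abs]
  have hba : ‖b - a‖ ≠ 0 := norm_ne_zero_iff.2 (sub_ne_zero.2 hab.symm)
  have htrans : ∀ x y : Pt, q ∈ seg x y → p ∈ seg (x + c • nvec a b) (y + c • nvec a b) := by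
    intro x y hxy
    rw [← sub_add_cancel p q, hc, add_comm x, add_comm y]
    exact (mem_segment_translate ℝ _).2 hxy
  rcases le_or_gt 0 c with hc0 | hc0
  · left
    have hcoef : ‖p - q‖ / ‖b - a‖ = c := by
      rw [hnorm, abs_of_nonneg hc0, mul_div_cancel_right₀ _ hba]
    simpa only [offsetEdge, hcoef] using htrans a b hq
  · right
    have hcoef : (‖p - q‖ / ‖a - b‖) • nvec b a = c • nvec a b := by
      rw [norm_sub_rev a b, hnorm, abs_of_neg hc0, mul_div_cancel_right₀ _ hba, nvec_swap,
        neg_smul_neg]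
    simp only [offsetEdge, hcoef]
    exact htrans b a (by rwa [seg, segment_symm])

theorem mem_or_mem_seg_offsetEdge_of_forall_norm_sub_le {V : Finset Pt} {p q : Pt}
    (hq : q ∈ convexHull ℝ (V : Set Pt)) (hpq : p ≠ q)
    (hmin : ∀ x ∈ convexHull ℝ (V : Set Pt), ‖p - q‖ ≤ ‖p - x‖) :
    q ∈ V ∨ ∃ v₁ ∈ V, ∃ v₂ ∈ V,
      p ∈ seg (offsetEdge ‖p - q‖ v₁ v₂).1 (offsetEdge ‖p - q‖ v₁ v₂).2 := by
  set f : Pt →ₗ[ℝ] ℝ := innerₛₗ ℝ (p - q)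
  have hf : ∀ v ∈ V, f v ≤ f q := fun v hv => by
    have := inner_sub_nonpos_of_forall_norm_sub_le (convex_convexHull ℝ _) hq hmin
      (subset_convexHull ℝ _ hv)
    simp only [f, innerₛₗ_apply_apply, inner_sub_right] at this ⊢
    linarith
  set S := {v ∈ (V : Set Pt) | f v = f q}
  have hperp : ∀ v ∈ S, ⟪p - q, v - q⟫ = 0 := fun v hv => by
    rw [inner_sub_right, sub_eq_zero]
    exact hv.2
  have hline : S ⊆ range (AffineMap.lineMap q (q + nvec q p) : ℝ →ᵃ[ℝ] Pt) := fun v hv => by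
    obtain ⟨c, hc⟩ := exists_eq_smul_nvec hpq.symm (hperp v hv)
    refine ⟨c, ?_⟩
    rw [AffineMap.lineMap_apply, vadd_eq_add, vsub_eq_sub, add_sub_cancel_left, ← hc,
      sub_add_cancel]
  obtain ⟨a, ha, b, hb, hqab⟩ := exists_mem_segment_of_mem_convexHull_of_subset_range
    (V.finite_toSet.subset (sep_subset _ _)) hline (mem_convexHull_setOf_eq_of_forall_le hq hf)
  rcases eq_or_ne a b with rfl | hab
  · rw [segment_same, mem_singleton_iff] at hqab
    exact Or.inl (hqab ▸ ha.1)
  · have hperp_ab : ⟪p - q, b - a⟫ = 0 := by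
      rw [← sub_sub_sub_cancel_right b a q, inner_sub_right, hperp b hb, hperp a ha, sub_zero]
    rcases mem_seg_offsetEdge_or_mem_seg_offsetEdge_swap hab hqab hperp_ab with h | h
    exacts [Or.inr ⟨a, ha.1, b, hb.1, h⟩, Or.inr ⟨b, hb.1, a, ha.1, h⟩]

/-- The frontier of the buffered obstacle `X_obs^b = {p : ∃ p' ∈ X_obs, ‖p - p'‖ ≤ b}`,
where `X_obs` is a nonempty finite union of two-dimensional convex polytopes (convex hulls
of finite sets with nonempty interior), is contained in the union of finitely many line
segments and finitely many circles of radius `b` centered at points of `X_obs`. -/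
theorem buffered_obstacle_boundary
    (X_obs : Set Pt)
    (hXobs : ∃ (N : ℕ) (V : Fin N → Finset Pt), 0 < N ∧
      X_obs = ⋃ i, convexHull ℝ (V i : Set Pt) ∧
      ∀ i, (interior (convexHull ℝ ((V i : Set Pt)))).Nonempty)
    (b : ℝ) (hb : 0 < b) :
    ∃ (nL nA : ℕ) (E : Fin nL → Pt × Pt) (q : Fin nA → Pt),
      (∀ j, q j ∈ X_obs) ∧
      frontier {p : Pt | ∃ p' ∈ X_obs, ‖p - p'‖ ≤ b} ⊆
        (⋃ i, seg (E i).1 (E i).2) ∪ (⋃ j, Metric.sphere (q j) b) := by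
  obtain ⟨N, V, -, rfl, -⟩ := hXobs
  set W : Set Pt := ⋃ i, (V i : Set Pt)
  have hW : W.Finite := finite_iUnion fun i => (V i).finite_toSet
  obtain ⟨nA, q, -, hq⟩ := hW.fin_param
  obtain ⟨nL, e, -, he⟩ := (hW.prod hW).fin_param
  refine ⟨nL, nA, fun k => offsetEdge b (e k).1 (e k).2, q, fun j => ?_, fun p hp => ?_⟩
  · obtain ⟨i, hi⟩ := mem_iUnion.1 (hq ▸ mem_range_self j : q j ∈ W)
    exact mem_iUnion.2 ⟨i, subset_convexHull ℝ _ hi⟩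
  have hX : IsCompact (⋃ i, convexHull ℝ (V i : Set Pt)) :=
    isCompact_iUnion fun i => (V i).finite_toSet.isCompact_convexHull (𝕜 := ℝ)
  obtain ⟨x, hx, hpx, hmin⟩ := exists_norm_sub_eq_of_mem_frontier hX hb.le hp
  obtain ⟨i, hxi⟩ := mem_iUnion.1 hx
  have hpx_ne : p ≠ x := fun h => hb.ne' (by rw [← hpx, h, sub_self, norm_zero])
  rcases mem_or_mem_seg_offsetEdge_of_forall_norm_sub_le hxi hpx_ne
    (fun y hy => hmin y (mem_iUnion.2 ⟨i, hy⟩)) with hxV | ⟨v₁, hv₁, v₂, hv₂, hpe⟩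
  · obtain ⟨j, hj⟩ := (hq.symm ▸ mem_iUnion.2 ⟨i, hxV⟩ : x ∈ range q)
    exact Or.inr (mem_iUnion.2 ⟨j, by rw [Metric.mem_sphere, hj, dist_eq_norm, hpx]⟩)
  · obtain ⟨k, hk⟩ := (he.symm ▸ ⟨mem_iUnion.2 ⟨i, hv₁⟩, mem_iUnion.2 ⟨i, hv₂⟩⟩ :
      (v₁, v₂) ∈ range e)
    exact Or.inl (mem_iUnion.2 ⟨k, by simpa only [hk, hpx] using hpe⟩)

end
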